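/- arXiv:2511.10513 — 5 statements merged into one kernel-verified Lean document; each statement's English description precedes it below -/
import Mathlib

section
/- Let W be a left Kan extendable full subcategory of a category C with density comonad (T, ε, δ), and let J : W ⥤ C be the inclusion functor. Then an object C₀ of C admits a T-coalgebra structure (i.e., C₀ is W-generated) if and only if there exists a category K and a functor F : K ⥤ W such that C₀ is isomorphic to the colimit of J ∘ F. -/
open CategoryTheory CategoryTheory.Limits

universe v₁ v₂ u₁ u₂

/-!
Each `J w` is a `T`-coalgebra via `η w`, and the forgetful functor from `T`-coalgebras creates
colimits, so every colimit of a diagram in `W` carries a coalgebra structure. Conversely, when `δ`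
is invertible the counit inverts every coalgebra structure map, so a coalgebra `X` is isomorphic
to `T X`, which by the pointwise Kan extension property is the colimit of the canonical diagram
`J ↓ X ⥤ W ⥤ C`; passing to `AsSmall` puts its indexing category in the required universe.
-/

namespace CategoryTheory.Comonad

variable {C : Type*} [Category C] {T : Comonad C}

theorem map_ε_app_of_isIso_δ [IsIso T.δ] (X : C) :
    (T : C ⥤ C).map (T.ε.app X) = T.ε.app ((T : C ⥤ C).obj X) := by
  rw [← cancel_epi (T.δ.app X), T.right_counit, T.left_counit]

namespace Coalgebra

theorem isIso_a [IsIso T.δ] (A : T.Coalgebra) : IsIso A.a := by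
  refine ⟨T.ε.app A.A, A.counit, ?_⟩
  calc T.ε.app A.A ≫ A.a = (T : C ⥤ C).map A.a ≫ T.ε.app ((T : C ⥤ C).obj A.A) :=
        (T.ε.naturality A.a).symm
    _ = (T : C ⥤ C).map (A.a ≫ T.ε.app A.A) := by rw [Functor.map_comp, map_ε_app_of_isIso_δ]
    _ = 𝟙 _ := by rw [A.counit, Functor.map_id]

def ofIso (A : T.Coalgebra) {X : C} (e : A.A ≅ X) : T.Coalgebra where
  A := X
  a := e.inv ≫ A.a ≫ (T : C ⥤ C).map e.hom
  counit := by simp [A.counit_assoc]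
  coassoc := by simp [A.coassoc_assoc]

end Coalgebra

theorem exists_coalgebra_structure_iff (X : C) :
    (∃ a : X ⟶ (T : C ⥤ C).obj X, a ≫ T.ε.app X = 𝟙 X ∧ a ≫ T.δ.app X = a ≫ (T : C ⥤ C).map a) ↔
      ∃ A : T.Coalgebra, Nonempty (A.A ≅ X) := by
  constructor
  · rintro ⟨a, counit, coassoc⟩
    exact ⟨⟨X, a, counit, coassoc⟩, ⟨Iso.refl X⟩⟩
  · rintro ⟨A, ⟨e⟩⟩
    exact ⟨(A.ofIso e).a, (A.ofIso e).counit, (A.ofIso e).coassoc⟩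

theorem exists_coalgebra_iso_of_isColimit {K : Type*} [Category K] {D : K ⥤ T.Coalgebra}
    {c : Cocone (D ⋙ T.forget)} (hc : IsColimit c) : ∃ A : T.Coalgebra, Nonempty (A.A ≅ c.pt) :=
  ⟨(liftColimit hc).pt, ⟨(Cocone.forget _).mapIso (liftedColimitMapsToOriginal hc)⟩⟩

def liftCoalgebra {W : Type*} [Category W] {J : W ⥤ C} (η : J ⟶ J ⋙ (T : C ⥤ C))
    (hε : ∀ w : W, η.app w ≫ T.ε.app (J.obj w) = 𝟙 (J.obj w))
    (hδ : ∀ w : W, η.app w ≫ T.δ.app (J.obj w) = η.app w ≫ (T : C ⥤ C).map (η.app w)) :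
    W ⥤ T.Coalgebra where
  obj w := ⟨J.obj w, η.app w, hε w, hδ w⟩
  map f := ⟨J.map f, (η.naturality f).symm⟩

end CategoryTheory.Comonad

theorem CategoryTheory.Limits.IsColimit.exists_colimit_iso.{w, u, v}
    {W : Type*} [Category W] {C : Type*} [Category C] {J : W ⥤ C}
    {D : Type u} [Category.{v} D] {G : D ⥤ W} {c : Cocone (G ⋙ J)} (hc : IsColimit c) :
    ∃ (K : Type (max u v w)) (_ : Category.{max u v w} K) (F : K ⥤ W)
      (_ : HasColimit (F ⋙ J)), Nonempty (colimit (F ⋙ J) ≅ c.pt) := by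
  have hc' := hc.whiskerEquivalence (AsSmall.equiv.{v, u, w} (C := D)).symm
  have : HasColimit ((AsSmall.down ⋙ G) ⋙ J) := HasColimit.mk ⟨_, hc'⟩
  exact ⟨AsSmall.{w} D, inferInstance, AsSmall.down ⋙ G, this,
    ⟨(colimit.isColimit ((AsSmall.down ⋙ G) ⋙ J)).coconePointUniqueUpToIso hc'⟩⟩

theorem wGenerated_iff_colimit_of_diagram_in_W_general
    {W : Type u₁} [Category.{v₁} W] {C : Type u₂} [Category.{v₂} C]
    (J : W ⥤ C)
    (T : Comonad C) (η : J ⟶ J ⋙ (T : C ⥤ C))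
    (hkan : (Functor.LeftExtension.mk (T : C ⥤ C) η).IsPointwiseLeftKanExtension)
    (hε : ∀ w : W, η.app w ≫ T.ε.app (J.obj w) = 𝟙 (J.obj w))
    (hδ : ∀ w : W, η.app w ≫ T.δ.app (J.obj w) = η.app w ≫ (T : C ⥤ C).map (η.app w))
    (hidem : IsIso T.δ) (C₀ : C) :
    (∃ a : C₀ ⟶ (T : C ⥤ C).obj C₀,
        a ≫ T.ε.app C₀ = 𝟙 C₀ ∧ a ≫ T.δ.app C₀ = a ≫ (T : C ⥤ C).map a) ↔
    ∃ (K : Type (max u₁ u₂ v₁ v₂)) (_ : Category.{max u₁ u₂ v₁ v₂} K) (F : K ⥤ W)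
      (_ : HasColimit (F ⋙ J)), Nonempty (colimit (F ⋙ J) ≅ C₀) := by
  rw [Comonad.exists_coalgebra_structure_iff]
  constructor
  · rintro ⟨A, ⟨e⟩⟩
    have := A.isIso_a
    obtain ⟨K, _, F, _, ⟨e'⟩⟩ := (hkan A.A).exists_colimit_iso.{max u₁ u₂ v₁ v₂}
    exact ⟨K, _, F, _, ⟨e' ≪≫ (asIso A.a).symm ≪≫ e⟩⟩
  · rintro ⟨K, _, F, _, ⟨e⟩⟩
    obtain ⟨A, ⟨e'⟩⟩ := Comonad.exists_coalgebra_iso_of_isColimit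
      (D := F ⋙ Comonad.liftCoalgebra η hε hδ) (colimit.isColimit (F ⋙ J))
    exact ⟨A, ⟨e' ≪≫ e⟩⟩

/-- Let `W` be a left Kan extendable full subcategory of `C` with
inclusion `J : W ⥤ C`: the comonad `T` together with `η : J ⟶ J ⋙ T` is a pointwise
left Kan extension of `J` along itself, the counit `ε` and comultiplication `δ` of `T`
satisfy `(εJ) ∘ η = 1_J` and `(δJ) ∘ η = (Tη) ∘ η`, and the density comonad `T` is
idempotent (`δ` is an isomorphism).  Then an object `C₀` of `C` admits a `T`-coalgebra
structure (i.e. `C₀` is `W`-generated) if and only if there are a category `K` and a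
functor `F : K ⥤ W` such that `C₀` is isomorphic to the colimit of `J ∘ F`. -/
theorem wGenerated_iff_colimit_of_diagram_in_W
    {W : Type u₁} [Category.{v₁} W] {C : Type u₂} [Category.{v₂} C]
    (J : W ⥤ C) [J.Full] [J.Faithful]
    (T : Comonad C) (η : J ⟶ J ⋙ (T : C ⥤ C))
    (hkan : (Functor.LeftExtension.mk (T : C ⥤ C) η).IsPointwiseLeftKanExtension)
    (hε : ∀ w : W, η.app w ≫ T.ε.app (J.obj w) = 𝟙 (J.obj w))
    (hδ : ∀ w : W, η.app w ≫ T.δ.app (J.obj w) = η.app w ≫ (T : C ⥤ C).map (η.app w))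
    (hidem : IsIso T.δ) (C₀ : C) :
    (∃ a : C₀ ⟶ (T : C ⥤ C).obj C₀,
        a ≫ T.ε.app C₀ = 𝟙 C₀ ∧ a ≫ T.δ.app C₀ = a ≫ (T : C ⥤ C).map a) ↔
    ∃ (K : Type (max u₁ u₂ v₁ v₂)) (_ : Category.{max u₁ u₂ v₁ v₂} K) (F : K ⥤ W)
      (_ : HasColimit (F ⋙ J)), Nonempty (colimit (F ⋙ J) ≅ C₀) :=
  wGenerated_iff_colimit_of_diagram_in_W_general J T η hkan hε hδ hidem C₀
end

section
/- Let W be a left Kan extendable full subcategory of a bicomplete category C. Assume that (1) every object of W is exponentiable in C, and (2) for all V, W′ ∈ W, the product V ×_C W′ is W-generated. Then for every V ∈ W and every W-generated object Y, the product V ×_C Y is W-generated; consequently the product of V and Y in the category W_l[C] of W-generated objects exists and coincides with V ×_C Y. -/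
open CategoryTheory CategoryTheory.Limits

/-!
For an idempotent comonad the coalgebras are exactly the objects at which the counit is
invertible, and they are closed under colimits: a section of the counit at a colimit is glued
from the inverse counits along the diagram. A `W`-generated `Y` is, through `ε_Y`, the canonical
colimit of the objects `J w` over `J ↓ Y`; since `- ⨯ J V` is a left adjoint, `Y ⨯ J V` is then a
colimit of the `W`-generated `J w ⨯ J V`. The inclusion of `W_l[C]` is fully faithful, so it
reflects the product.
-/

universe v₁ v₂ u₁ u₂

/-- An object `X` of `C` is `W`-generated (relative to the density comonad `T`) if it
admits a `T`-coalgebra structure. -/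
def WGen {C : Type u₂} [Category.{v₂} C] (T : Comonad C) (X : C) : Prop :=
  ∃ a : X ⟶ (T : C ⥤ C).obj X,
    a ≫ T.ε.app X = 𝟙 X ∧ a ≫ T.δ.app X = a ≫ (T : C ⥤ C).map a

section IdempotentComonad

variable {C : Type u₂} [Category.{v₂} C] {T : Comonad C}

lemma comp_inv_counit {A B : C} (h : A ⟶ B) [IsIso (T.ε.app A)] [IsIso (T.ε.app B)] :
    h ≫ inv (T.ε.app B) = inv (T.ε.app A) ≫ T.map h := by
  rw [IsIso.comp_inv_eq, Category.assoc, T.counit_naturality, IsIso.inv_hom_id_assoc]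

variable [IsIso T.δ]

lemma wGen_iff_isIso_counit (X : C) : WGen T X ↔ IsIso (T.ε.app X) := by
  refine ⟨fun ⟨a, ha, _⟩ ↦ (T.isSplitEpi_iff_isIso_counit X).mp ⟨⟨⟨a, ha⟩⟩⟩, fun _ ↦ ?_⟩
  have hδ : T.δ.app X = T.map (inv (T.ε.app X)) := by
    rw [Functor.map_inv]
    exact IsIso.eq_inv_of_inv_hom_id (T.right_counit X)
  exact ⟨inv (T.ε.app X), IsIso.inv_hom_id _, by rw [hδ]⟩

lemma wGen_of_section {X : C} (s : X ⟶ T.obj X) (hs : s ≫ T.ε.app X = 𝟙 X) : WGen T X :=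
  (wGen_iff_isIso_counit X).mpr ((T.isSplitEpi_iff_isIso_counit X).mp ⟨⟨⟨s, hs⟩⟩⟩)

lemma WGen.of_iso {X X' : C} (e : X ≅ X') (h : WGen T X) : WGen T X' := by
  have := (wGen_iff_isIso_counit X).mp h
  refine (wGen_iff_isIso_counit X').mpr ?_
  rw [← Iso.inv_hom_id_assoc (T.mapIso e) (T.ε.app X'), Functor.mapIso_hom, T.counit_naturality]
  infer_instance

lemma wGen_of_isColimit {K : Type*} [Category K] {D : K ⥤ C} {c : Cocone D}
    (hc : IsColimit c) (hD : ∀ k, WGen T (D.obj k)) : WGen T c.pt := by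
  have := fun k ↦ (wGen_iff_isIso_counit (D.obj k)).mp (hD k)
  let s : Cocone D :=
    { pt := T.obj c.pt
      ι := { app := fun k ↦ inv (T.ε.app (D.obj k)) ≫ T.map (c.ι.app k)
             naturality := fun k k' f ↦ by
               simp [reassoc_of% comp_inv_counit (D.map f), ← T.map_comp] } }
  refine wGen_of_section (hc.desc s) (hc.hom_ext fun k ↦ ?_)
  simp [s]

end IdempotentComonad

section DensityComonad

variable {W : Type u₁} [Category.{v₁} W] {C : Type u₂} [Category.{v₂} C]
  {J : W ⥤ C} {T : Comonad C} {η : J ⟶ J ⋙ (T : C ⥤ C)} [IsIso T.δ]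

lemma wGen_obj_of_preservesColimit
    (hkan : (Functor.LeftExtension.mk (T : C ⥤ C) η).IsPointwiseLeftKanExtension)
    (F : C ⥤ C) (hF : ∀ w, WGen T (F.obj (J.obj w))) {Y : C}
    [PreservesColimit (CostructuredArrow.proj J Y ⋙ J) F] (hY : WGen T Y) :
    WGen T (F.obj Y) := by
  have := (wGen_iff_isIso_counit Y).mp hY
  have hFTY : WGen T (F.obj (T.obj Y)) :=
    wGen_of_isColimit (isColimitOfPreserves F (hkan Y)) fun f ↦ hF f.left
  exact hFTY.of_iso (F.mapIso (asIso (T.ε.app Y)))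

end DensityComonad

theorem prod_wGenerated_of_exponentiable_general
    {W : Type u₁} [Category.{v₁} W] {C : Type u₂} [Category.{v₂} C]
    [HasLimits C]
    (J : W ⥤ C)
    (T : Comonad C) (η : J ⟶ J ⋙ (T : C ⥤ C))
    (hkan : (Functor.LeftExtension.mk (T : C ⥤ C) η).IsPointwiseLeftKanExtension)
    (hε : ∀ w : W, η.app w ≫ T.ε.app (J.obj w) = 𝟙 (J.obj w))
    (hidem : IsIso T.δ)
    (hexp : ∀ V : W, (prod.functor.flip.obj (J.obj V)).IsLeftAdjoint)
    (hprod : ∀ V V' : W, WGen T (J.obj V ⨯ J.obj V'))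
    (V : W) (Y₀ : C) (hY : WGen T Y₀) :
    WGen T (J.obj V ⨯ Y₀) ∧
    ∃ (hV : WGen T (J.obj V)) (hP : WGen T (J.obj V ⨯ Y₀)),
      Nonempty (IsLimit (BinaryFan.mk
        (P := (⟨J.obj V ⨯ Y₀, hP⟩ : ObjectProperty.FullSubcategory (WGen T)))
        (show (⟨J.obj V ⨯ Y₀, hP⟩ : ObjectProperty.FullSubcategory (WGen T)) ⟶ ⟨J.obj V, hV⟩ from
          ObjectProperty.homMk (prod.fst : J.obj V ⨯ Y₀ ⟶ J.obj V))
        (show (⟨J.obj V ⨯ Y₀, hP⟩ : ObjectProperty.FullSubcategory (WGen T)) ⟶ ⟨Y₀, hY⟩ from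
          ObjectProperty.homMk (prod.snd : J.obj V ⨯ Y₀ ⟶ Y₀)))) := by
  have := hidem
  have := hexp V
  have hYV : WGen T (Y₀ ⨯ J.obj V) :=
    wGen_obj_of_preservesColimit hkan (prod.functor.flip.obj (J.obj V)) (fun w ↦ hprod w V) hY
  have hP : WGen T (J.obj V ⨯ Y₀) := hYV.of_iso (prod.braiding _ _)
  exact ⟨hP, wGen_of_section (η.app V) (hε V), hP,
    ⟨isLimitOfReflectsOfMapIsLimit (ObjectProperty.ι _) _ _ (prodIsProd _ _)⟩⟩

/-- Let `W` be a left Kan extendable full subcategory of a bicomplete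
category `C` (the inclusion `J` has a pointwise left Kan extension `(T, η)` along
itself whose density comonad is idempotent).  Assume that (1) every object of `W` is
exponentiable in `C` (the functor `- × J V` has a right adjoint), and (2) for all
`V, V' ∈ W` the product `J V ⨯ J V'` is `W`-generated.  Then for every `V ∈ W` and
every `W`-generated object `Y₀`, the product `J V ⨯ Y₀` is `W`-generated; consequently
the product of `V` and `Y₀` in the full subcategory `W_l[C]` of `W`-generated objects
exists and coincides with `J V ⨯ Y₀`: the binary fan in `W_l[C]` formed by the two
projections is a limit fan. -/
theorem prod_wGenerated_of_exponentiable
    {W : Type u₁} [Category.{v₁} W] {C : Type u₂} [Category.{v₂} C]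
    [HasLimits C] [HasColimits C]
    (J : W ⥤ C) [J.Full] [J.Faithful]
    (T : Comonad C) (η : J ⟶ J ⋙ (T : C ⥤ C))
    (hkan : (Functor.LeftExtension.mk (T : C ⥤ C) η).IsPointwiseLeftKanExtension)
    (hε : ∀ w : W, η.app w ≫ T.ε.app (J.obj w) = 𝟙 (J.obj w))
    (hδ : ∀ w : W, η.app w ≫ T.δ.app (J.obj w) = η.app w ≫ (T : C ⥤ C).map (η.app w))
    (hidem : IsIso T.δ)
    (hexp : ∀ V : W, (prod.functor.flip.obj (J.obj V)).IsLeftAdjoint)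
    (hprod : ∀ V V' : W, WGen T (J.obj V ⨯ J.obj V'))
    (V : W) (Y₀ : C) (hY : WGen T Y₀) :
    WGen T (J.obj V ⨯ Y₀) ∧
    ∃ (hV : WGen T (J.obj V)) (hP : WGen T (J.obj V ⨯ Y₀)),
      Nonempty (IsLimit (BinaryFan.mk
        (P := (⟨J.obj V ⨯ Y₀, hP⟩ : ObjectProperty.FullSubcategory (WGen T)))
        (show (⟨J.obj V ⨯ Y₀, hP⟩ : ObjectProperty.FullSubcategory (WGen T)) ⟶ ⟨J.obj V, hV⟩ from
          ObjectProperty.homMk (prod.fst : J.obj V ⨯ Y₀ ⟶ J.obj V))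
        (show (⟨J.obj V ⨯ Y₀, hP⟩ : ObjectProperty.FullSubcategory (WGen T)) ⟶ ⟨Y₀, hY⟩ from
          ObjectProperty.homMk (prod.snd : J.obj V ⨯ Y₀ ⟶ Y₀)))) :=
  prod_wGenerated_of_exponentiable_general J T η hkan hε hidem hexp hprod V Y₀ hY
end

section
/- Let W be a left Kan extendable full subcategory of a bicomplete category C which is closeable, i.e.: (1) every object of W is exponentiable in C; (2) for all V, W′ ∈ W, the product V ×_C W′ is W-generated; (3) for all W-generated objects X and Y, the cone θ : J_X ×_C Y ⇒ X ×_{W_l[C]} Y, whose component at (σ : V → X) ∈ W/X is the morphism σ ×_{W_l[C]} 1_Y : V ×_C Y → X ×_{W_l[C]} Y, is a colimiting cone in C; (4) for all W-generated objects Y and Z, the functor S^Y_Z : (W/Y)^op ⥤ C sending (σ : V → Y) to the exponential object Hom(V, Z) has a limit in C. Then the category W_l[C] of W-generated objects is cartesian closed, with internal hom of Y and Z given by applying the coreflector C ⥤ W_l[C] to the limit of S^Y_Z. -/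
open CategoryTheory CategoryTheory.Limits

universe v₁ v₂ u₁ u₂

/-!
Invertibility of `δ` makes `T` idempotent: `ε` is invertible on every `T`-coalgebra, so `T`
corestricts to a right adjoint of the inclusion of `W`-generated objects, which is therefore
coreflective and inherits products from `C`. For `W`-generated `Y`, `X`, `Z`, a map `Y ⊗ X ⟶ Z`
is, by (3), a cocone on `σ ↦ V ⨯ X` over `σ : V ⟶ Y`; transposing each leg along
`- ⨯ V ⊣ Hom(V, -)` turns it into a cone `X ⟶ Hom(V, Z)` on `S^Y_Z`, i.e. a map `X ⟶ lim S^Y_Z`,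
i.e. (as `X` is `W`-generated) a map to its coreflection. These bijections are natural in `X`, so
the coreflection of `lim S^Y_Z` is the internal hom; any other coreflector gives an isomorphic
object by uniqueness of adjoints.
-/

open MonoidalCategory ObjectProperty

noncomputable section

section IdempotentComonad

variable {C : Type u₂} [Category.{v₂} C] (T : Comonad C)

lemma wGen_obj (X : C) : WGen T (T.obj X) :=
  ⟨T.δ.app X, T.left_counit X, (T.coassoc X).symm⟩

def wGenCoreflector : C ⥤ FullSubcategory (WGen T) :=
  lift (WGen T) T (wGen_obj T)

variable {T} [IsIso T.δ]

lemma CategoryTheory.Comonad.map_ε_app_of_isIso_δ_s5 (X : C) :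
    T.map (T.ε.app X) = T.ε.app (T.obj X) := by
  rw [← cancel_epi (T.δ.app X), T.right_counit, T.left_counit]

instance CategoryTheory.Comonad.isIso_ε_app_obj_of_isIso_δ (X : C) : IsIso (T.ε.app (T.obj X)) :=
  IsIso.of_isIso_fac_left (T.left_counit X)

lemma WGen.isIso_ε_app {X : C} (hX : WGen T X) : IsIso (T.ε.app X) := by
  obtain ⟨a, ha, -⟩ := hX
  have hTa : T.map a = T.δ.app X := by
    rw [← cancel_mono (T.ε.app (T.obj X)), ← T.map_ε_app_of_isIso_δ_s5, ← T.map_comp, ha,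
      T.map_id, T.right_counit]
  refine ⟨a, ?_, ha⟩
  calc T.ε.app X ≫ a = T.map a ≫ T.ε.app (T.obj X) := (T.ε.naturality a).symm
    _ = 𝟙 _ := by rw [hTa, T.left_counit]

@[simps! hom]
def WGen.εIso {X : C} (hX : WGen T X) : T.obj X ≅ X :=
  haveI := hX.isIso_ε_app
  asIso (T.ε.app X)

variable (T)

def wGenCoreflectorAdj : ι (WGen T) ⊣ wGenCoreflector T where
  unit :=
    { app A := homMk A.2.εIso.inv
      naturality A B f := by
        ext
        dsimp [wGenCoreflector]
        rw [Iso.comp_inv_eq, Category.assoc, Iso.eq_inv_comp, WGen.εIso_hom, WGen.εIso_hom]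
        exact (T.ε.naturality f.hom).symm }
  counit := T.ε
  left_triangle_components A := A.2.εIso.inv_hom_id
  right_triangle_components X := by
    ext
    dsimp [wGenCoreflector]
    rw [T.map_ε_app_of_isIso_δ_s5]
    exact (wGen_obj T X).εIso.inv_hom_id

instance : Coreflective (ι (WGen T)) where
  R := wGenCoreflector T
  adj := wGenCoreflectorAdj T

end IdempotentComonad

section Exponentials

variable {W : Type u₁} [Category.{v₁} W] {C : Type u₂} [Category.{v₂} C] [HasBinaryProducts C]
  (J : W ⥤ C) {E : W → C ⥤ C} (adjE : ∀ V : W, prod.functor.flip.obj (J.obj V) ⊣ E V)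

def expPrecomp {V V' : W} (u : V ⟶ V') (Z : C) : (E V').obj Z ⟶ (E V).obj Z :=
  (adjE V).homEquiv _ Z (prod.map (𝟙 _) (J.map u) ≫ (adjE V').counit.app Z)

lemma homEquiv_symm_comp_expPrecomp {X Z : C} {V V' : W} (u : V ⟶ V') (f : X ⟶ (E V').obj Z) :
    ((adjE V).homEquiv X Z).symm (f ≫ expPrecomp J adjE u Z) =
      prod.map (𝟙 X) (J.map u) ≫ ((adjE V').homEquiv X Z).symm f := by
  rw [Adjunction.homEquiv_naturality_left_symm, expPrecomp, Equiv.symm_apply_apply,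
    Adjunction.homEquiv_counit]
  exact (reassoc_of% (prod.map_swap (J.map u) f).symm) _

lemma expPrecomp_id (V : W) (Z : C) : expPrecomp J adjE (𝟙 V) Z = 𝟙 _ := by
  apply ((adjE V).homEquiv _ Z).symm.injective
  rw [← Category.id_comp (expPrecomp J adjE (𝟙 V) Z), homEquiv_symm_comp_expPrecomp, J.map_id,
    prod.map_id_id]
  exact Category.id_comp _

lemma expPrecomp_comp {V V' V'' : W} (u : V ⟶ V') (v : V' ⟶ V'') (Z : C) :
    expPrecomp J adjE (u ≫ v) Z = expPrecomp J adjE v Z ≫ expPrecomp J adjE u Z := by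
  apply ((adjE V).homEquiv _ Z).symm.injective
  rw [← Category.id_comp (expPrecomp J adjE (u ≫ v) Z), homEquiv_symm_comp_expPrecomp,
    homEquiv_symm_comp_expPrecomp, ← Category.id_comp (expPrecomp J adjE v Z),
    homEquiv_symm_comp_expPrecomp, J.map_comp, prod.map_id_comp]
  exact Category.assoc _ _ _

def expFunctor (Z : C) : Wᵒᵖ ⥤ C where
  obj V := (E V.unop).obj Z
  map u := expPrecomp J adjE u.unop Z
  map_id V := expPrecomp_id J adjE V.unop Z
  map_comp u v := expPrecomp_comp J adjE v.unop u.unop Z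

/-- The functor `S^Y_Z`. -/
abbrev expDiagram (Y Z : C) : (CostructuredArrow J Y)ᵒᵖ ⥤ C :=
  (CostructuredArrow.proj J Y).op ⋙ expFunctor J adjE Z

def expCone {Y Z M : C} (π : ∀ σ : CostructuredArrow J Y, M ⟶ (E σ.left).obj Z)
    (hπ : ∀ (σ σ' : CostructuredArrow J Y) (m : σ ⟶ σ'), π σ = π σ' ≫ expPrecomp J adjE m.left Z) :
    Cone (expDiagram J adjE Y Z) where
  pt := M
  π := { app σ := π σ.unop, naturality _ _ m := (Category.id_comp _).trans (hπ _ _ m.unop) }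

def isLimitExpCone {Y Z M : C} (π : ∀ σ : CostructuredArrow J Y, M ⟶ (E σ.left).obj Z)
    (hπ : ∀ (σ σ' : CostructuredArrow J Y) (m : σ ⟶ σ'), π σ = π σ' ≫ expPrecomp J adjE m.left Z)
    (huniv : ∀ (N : C) (ρ : ∀ σ : CostructuredArrow J Y, N ⟶ (E σ.left).obj Z),
      (∀ (σ σ' : CostructuredArrow J Y) (m : σ ⟶ σ'), ρ σ = ρ σ' ≫ expPrecomp J adjE m.left Z) →
        ∃! h : N ⟶ M, ∀ σ, h ≫ π σ = ρ σ) :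
    IsLimit (expCone J adjE π hπ) :=
  IsLimit.ofExistsUnique fun s => by
    obtain ⟨h, fac, uniq⟩ := huniv s.pt (fun σ => s.π.app (.op σ))
      fun _ _ m => (Category.id_comp _).symm.trans (s.π.naturality m.op)
    exact ⟨h, fun σ => fac σ.unop, fun h' fac' => uniq h' fun σ => fac' (.op σ)⟩

def prodTransposeEquiv (V : W) (X Z : C) : (J.obj V ⨯ X ⟶ Z) ≃ (X ⟶ (E V).obj Z) where
  toFun c := (adjE V).homEquiv X Z ((prod.braiding X (J.obj V)).hom ≫ c)
  invFun ρ := (prod.braiding X (J.obj V)).inv ≫ ((adjE V).homEquiv X Z).symm ρ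
  left_inv _ := (congrArg _ (Equiv.symm_apply_apply _ _)).trans (Iso.inv_hom_id_assoc _ _)
  right_inv _ := (congrArg _ (Iso.hom_inv_id_assoc _ _)).trans (Equiv.apply_symm_apply _ _)

lemma prodTransposeEquiv_eq_comp_expPrecomp_iff {X Z : C} {V V' : W} (u : V ⟶ V')
    (c : J.obj V ⨯ X ⟶ Z) (c' : J.obj V' ⨯ X ⟶ Z) :
    prodTransposeEquiv J adjE V X Z c =
        prodTransposeEquiv J adjE V' X Z c' ≫ expPrecomp J adjE u Z ↔
      prod.map (J.map u) (𝟙 X) ≫ c' = c := by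
  change (adjE V).homEquiv X Z ((prod.braiding X (J.obj V)).hom ≫ c) =
      (adjE V').homEquiv X Z ((prod.braiding X (J.obj V')).hom ≫ c') ≫ expPrecomp J adjE u Z ↔ _
  rw [← ((adjE V).homEquiv X Z).symm.injective.eq_iff, homEquiv_symm_comp_expPrecomp,
    Equiv.symm_apply_apply, Equiv.symm_apply_apply]
  -- `erw`: the source of `(adjE V).homEquiv X Z` is `(prod.functor.flip.obj _).obj X`, which is
  -- `X ⨯ _` only up to unfolding
  erw [braid_natural_assoc]
  exact (Iso.cancel_iso_hom_left _ _ _).trans eq_comm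

def transposeEquiv {I : Type*} [Category I] (F : I ⥤ W) (X Z : C) :
    (F ⋙ J ⋙ prod.functor.flip.obj X ⟶ (Functor.const I).obj Z) ≃
      ((Functor.const Iᵒᵖ).obj X ⟶ F.op ⋙ expFunctor J adjE Z) where
  toFun c :=
    { app i := prodTransposeEquiv J adjE (F.obj i.unop) X Z (c.app i.unop)
      naturality i i' m := (Category.id_comp _).trans <|
        (prodTransposeEquiv_eq_comp_expPrecomp_iff J adjE (F.map m.unop) _ _).mpr
          ((c.naturality m.unop).trans (Category.comp_id _)) }
  invFun ρ :=
    { app i := (prodTransposeEquiv J adjE (F.obj i) X Z).symm (ρ.app (.op i))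
      naturality i i' m := by
        refine ((prodTransposeEquiv_eq_comp_expPrecomp_iff J adjE (F.map m)
          ((prodTransposeEquiv J adjE (F.obj i) X Z).symm (ρ.app (.op i)))
          ((prodTransposeEquiv J adjE (F.obj i') X Z).symm (ρ.app (.op i')))).mp ?_).trans
          (Category.comp_id _).symm
        exact (Equiv.apply_symm_apply _ _).trans <|
          ((Category.id_comp _).symm.trans (ρ.naturality m.op)).trans
            (congrArg (· ≫ _) (Equiv.apply_symm_apply _ _).symm) }
  left_inv c := by
    ext i
    exact Equiv.symm_apply_apply _ _
  right_inv ρ := by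
    ext i
    exact Equiv.apply_symm_apply _ _

lemma transposeEquiv_whiskerLeft {I : Type*} [Category I] (F : I ⥤ W) {X' X : C} (Z : C)
    (f : X' ⟶ X) (c : F ⋙ J ⋙ prod.functor.flip.obj X ⟶ (Functor.const I).obj Z) :
    transposeEquiv J adjE F X' Z (Functor.whiskerLeft (F ⋙ J) (prod.functor.flip.map f) ≫ c) =
      (Functor.const Iᵒᵖ).map f ≫ transposeEquiv J adjE F X Z c := by
  ext i
  change (adjE _).homEquiv X' Z (_ ≫ prod.map (𝟙 _) f ≫ c.app i.unop) =
    f ≫ (adjE _).homEquiv X Z (_ ≫ c.app i.unop)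
  rw [← Adjunction.homEquiv_naturality_left]
  erw [braid_natural_assoc]
  rfl

end Exponentials

section ProdCocone

open CartesianMonoidalCategory

variable {W : Type u₁} [Category.{v₁} W] {C : Type u₂} [Category.{v₂} C] [HasBinaryProducts C]
  (J : W ⥤ C) {T : Comonad C} [CartesianMonoidalCategory (FullSubcategory (WGen T))]
  (hVY : ∀ (V : W) (Y : C), WGen T Y → WGen T (J.obj V ⨯ Y))

/-- The component `σ ×_{W_l[C]} 1_X` of the paper's cone `θ`. -/
def prodToTensor (Y X : FullSubcategory (WGen T)) (σ : CostructuredArrow J Y.obj) :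
    (⟨J.obj σ.left ⨯ X.obj, hVY σ.left X.obj X.2⟩ : FullSubcategory (WGen T)) ⟶ Y ⊗ X :=
  lift (homMk (prod.fst ≫ σ.hom)) (homMk prod.snd)

lemma prodMap_comp_prodToTensor (Y X : FullSubcategory (WGen T))
    {σ σ' : CostructuredArrow J Y.obj} (m : σ ⟶ σ') :
    homMk (prod.map (J.map m.left) (𝟙 X.obj)) ≫ prodToTensor J hVY Y X σ' =
      prodToTensor J hVY Y X σ := by
  ext1 <;> ext <;> simp [prodToTensor]

lemma prodToTensor_whiskerLeft (Y : FullSubcategory (WGen T)) {X' X : FullSubcategory (WGen T)}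
    (f : X' ⟶ X) (σ : CostructuredArrow J Y.obj) :
    prodToTensor J hVY Y X' σ ≫ Y ◁ f =
      homMk (prod.map (𝟙 _) f.hom) ≫ prodToTensor J hVY Y X σ := by
  ext1 <;> ext <;> simp [prodToTensor]

def prodCocone (Y X : FullSubcategory (WGen T)) :
    Cocone (CostructuredArrow.proj J Y.obj ⋙ J ⋙ prod.functor.flip.obj X.obj) where
  pt := (Y ⊗ X).obj
  ι :=
    { app σ := (prodToTensor J hVY Y X σ).hom
      naturality _ _ m := (congrArg (·.hom) (prodMap_comp_prodToTensor J hVY Y X m)).trans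
        (Category.comp_id _).symm }

lemma homEquiv_prodCocone_whiskerLeft {Y X' X : FullSubcategory (WGen T)}
    (hX' : IsColimit (prodCocone J hVY Y X')) (hX : IsColimit (prodCocone J hVY Y X))
    (f : X' ⟶ X) {Z : C} (h : (Y ⊗ X).obj ⟶ Z) :
    hX'.homEquiv ((Y ◁ f).hom ≫ h) =
      Functor.whiskerLeft (CostructuredArrow.proj J Y.obj ⋙ J) (prod.functor.flip.map f.hom) ≫
        hX.homEquiv h := by
  ext σ
  have := congrArg (·.hom ≫ h) (prodToTensor_whiskerLeft J hVY Y f σ)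
  simp only [FullSubcategory.comp_hom, Category.assoc] at this
  exact this

end ProdCocone

section Closed

variable {W : Type u₁} [Category.{v₁} W] {C : Type u₂} [Category.{v₂} C] [HasBinaryProducts C]
  (J : W ⥤ C) {T : Comonad C} [IsIso T.δ] [CartesianMonoidalCategory (FullSubcategory (WGen T))]
  {E : W → C ⥤ C} (adjE : ∀ V : W, prod.functor.flip.obj (J.obj V) ⊣ E V)
  [∀ Y Z : FullSubcategory (WGen T), HasLimit (expDiagram J adjE Y.obj Z.obj)]
  {hVY : ∀ (V : W) (Y : C), WGen T Y → WGen T (J.obj V ⨯ Y)}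
  (hθ : ∀ Y X : FullSubcategory (WGen T), IsColimit (prodCocone J hVY Y X))

def tensorHomEquiv (Y X Z : FullSubcategory (WGen T)) :
    (Y ⊗ X ⟶ Z) ≃ (X ⟶ (wGenCoreflector T).obj (limit (expDiagram J adjE Y.obj Z.obj))) :=
  (fullyFaithfulι (WGen T)).homEquiv.trans <| (hθ Y X).homEquiv.trans <|
    (transposeEquiv J adjE (CostructuredArrow.proj J Y.obj) X.obj Z.obj).trans <|
      (limit.isLimit _).homEquiv.symm.trans <| (wGenCoreflectorAdj T).homEquiv X _

lemma tensorHomEquiv_naturality (Y : FullSubcategory (WGen T))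
    {X' X Z : FullSubcategory (WGen T)} (f : X' ⟶ X) (g : Y ⊗ X ⟶ Z) :
    tensorHomEquiv J adjE hθ Y X' Z (Y ◁ f ≫ g) = f ≫ tensorHomEquiv J adjE hθ Y X Z g := by
  change (wGenCoreflectorAdj T).homEquiv X' _ ((limit.isLimit _).homEquiv.symm
      (transposeEquiv J adjE _ X'.obj Z.obj ((hθ Y X').homEquiv ((Y ◁ f).hom ≫ g.hom)))) =
    f ≫ (wGenCoreflectorAdj T).homEquiv X _ ((limit.isLimit _).homEquiv.symm
      (transposeEquiv J adjE _ X.obj Z.obj ((hθ Y X).homEquiv g.hom)))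
  rw [homEquiv_prodCocone_whiskerLeft J hVY (hθ Y X') (hθ Y X), transposeEquiv_whiskerLeft,
    IsLimit.homEquiv_symm_naturality, ← Adjunction.homEquiv_naturality_left]
  rfl

abbrev closedOfIsColimitProdCocone (Y : FullSubcategory (WGen T)) : Closed Y where
  rightAdj := Adjunction.rightAdjointOfEquiv (tensorHomEquiv J adjE hθ Y)
    fun _ _ _ => tensorHomEquiv_naturality J adjE hθ Y
  adj := Adjunction.adjunctionOfEquivRight _ _

end Closed

end

theorem wGenerated_cartesianClosed_general
    {W : Type u₁} [Category.{v₁} W] {C : Type u₂} [Category.{v₂} C]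
    [HasLimits C]
    (J : W ⥤ C)
    (T : Comonad C)
    (hidem : IsIso T.δ)
    -- (1) chosen exponentials for objects of `W`
    (E : W → C ⥤ C)
    (adjE : ∀ V : W, prod.functor.flip.obj (J.obj V) ⊣ E V)
    -- (2) and its consequences, needed to formulate (3)
    (hVY : ∀ (V : W) (Y : C), WGen T Y → WGen T (J.obj V ⨯ Y))
    -- (3) the cones `θ` are colimiting
    (hθ : ∀ (X Y : C) (hX : WGen T X) (hY : WGen T Y)
      (P : BinaryFan (⟨X, hX⟩ : ObjectProperty.FullSubcategory (WGen T)) ⟨Y, hY⟩) (hP : IsLimit P)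
      (Z₀ : C) (c : ∀ σ : CostructuredArrow J X, (J.obj σ.left ⨯ Y) ⟶ Z₀),
      (∀ (σ σ' : CostructuredArrow J X) (m : σ ⟶ σ'),
        prod.map (J.map m.left) (𝟙 Y) ≫ c σ' = c σ) →
      ∃! h : P.pt.obj ⟶ Z₀, ∀ σ : CostructuredArrow J X,
        (ObjectProperty.ι (WGen T)).map (hP.lift (BinaryFan.mk
          (show (⟨J.obj σ.left ⨯ Y, hVY σ.left Y hY⟩ : ObjectProperty.FullSubcategory (WGen T)) ⟶
              ⟨X, hX⟩ from ObjectProperty.homMk ((prod.fst : J.obj σ.left ⨯ Y ⟶ J.obj σ.left) ≫ σ.hom : J.obj σ.left ⨯ Y ⟶ X))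
          (show (⟨J.obj σ.left ⨯ Y, hVY σ.left Y hY⟩ : ObjectProperty.FullSubcategory (WGen T)) ⟶
              ⟨Y, hY⟩ from ObjectProperty.homMk (prod.snd : J.obj σ.left ⨯ Y ⟶ Y)))) ≫ h = c σ)
    -- (4) the functors `S^Y_Z` have limits in `C`
    (hS : ∀ (Y Z : C), WGen T Y → WGen T Z →
      ∃ (M : C) (π : ∀ σ : CostructuredArrow J Y, M ⟶ (E σ.left).obj Z),
        (∀ (σ σ' : CostructuredArrow J Y) (m : σ ⟶ σ'),
          π σ = π σ' ≫ ((adjE σ.left).homEquiv ((E σ'.left).obj Z) Z)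
            (prod.map (𝟙 ((E σ'.left).obj Z)) (J.map m.left) ≫
              (adjE σ'.left).counit.app Z)) ∧
        (∀ (N : C) (ρ : ∀ σ : CostructuredArrow J Y, N ⟶ (E σ.left).obj Z),
          (∀ (σ σ' : CostructuredArrow J Y) (m : σ ⟶ σ'),
            ρ σ = ρ σ' ≫ ((adjE σ.left).homEquiv ((E σ'.left).obj Z) Z)
              (prod.map (𝟙 ((E σ'.left).obj Z)) (J.map m.left) ≫
                (adjE σ'.left).counit.app Z)) →
          ∃! h : N ⟶ M, ∀ σ, h ≫ π σ = ρ σ)) :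
    -- conclusion: `W_l[C]` is cartesian closed, with internal hom the coreflection of
    -- the limit of `S^Y_Z`
    ∃ (cfp : CartesianMonoidalCategory (ObjectProperty.FullSubcategory (WGen T))),
      letI := cfp
      ∃ cc : MonoidalClosed (ObjectProperty.FullSubcategory (WGen T)),
        ∀ (Y Z : C) (hY : WGen T Y) (hZ : WGen T Z)
          (R : C ⥤ ObjectProperty.FullSubcategory (WGen T))
          (_ : ObjectProperty.ι (WGen T) ⊣ R)
          (M : C) (π : ∀ σ : CostructuredArrow J Y, M ⟶ (E σ.left).obj Z),
          (∀ (σ σ' : CostructuredArrow J Y) (m : σ ⟶ σ'),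
            π σ = π σ' ≫ ((adjE σ.left).homEquiv ((E σ'.left).obj Z) Z)
              (prod.map (𝟙 ((E σ'.left).obj Z)) (J.map m.left) ≫
                (adjE σ'.left).counit.app Z)) →
          (∀ (N : C) (ρ : ∀ σ : CostructuredArrow J Y, N ⟶ (E σ.left).obj Z),
            (∀ (σ σ' : CostructuredArrow J Y) (m : σ ⟶ σ'),
              ρ σ = ρ σ' ≫ ((adjE σ.left).homEquiv ((E σ'.left).obj Z) Z)
                (prod.map (𝟙 ((E σ'.left).obj Z)) (J.map m.left) ≫
                  (adjE σ'.left).counit.app Z)) →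
            ∃! h : N ⟶ M, ∀ σ, h ≫ π σ = ρ σ) →
          letI : Closed (⟨Y, hY⟩ : ObjectProperty.FullSubcategory (WGen T)) := cc.closed _
          Nonempty ((ihom (⟨Y, hY⟩ : ObjectProperty.FullSubcategory (WGen T))).obj ⟨Z, hZ⟩ ≅ R.obj M) := by
  have : HasLimits (FullSubcategory (WGen T)) := hasLimits_of_coreflective (ι (WGen T))
  let : CartesianMonoidalCategory (FullSubcategory (WGen T)) := .ofHasFiniteProducts
  have (Y Z : FullSubcategory (WGen T)) : HasLimit (expDiagram J adjE Y.obj Z.obj) := by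
    obtain ⟨M, π, hπ, huniv⟩ := hS Y.obj Z.obj Y.2 Z.2
    exact ⟨⟨⟨_, isLimitExpCone J adjE π hπ huniv⟩⟩⟩
  have hθ' (Y X : FullSubcategory (WGen T)) : IsColimit (prodCocone J hVY Y X) :=
    IsColimit.ofExistsUnique fun s =>
      hθ Y.obj X.obj Y.2 X.2 _ (CartesianMonoidalCategory.tensorProductIsBinaryProduct Y X) s.pt
        s.ι.app fun _ _ m => s.w m
  refine ⟨inferInstance, ⟨closedOfIsColimitProdCocone J adjE hθ'⟩, ?_⟩
  intro Y Z hY hZ R adjR M π hπ huniv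
  exact ⟨(wGenCoreflector T).mapIso
      ((limit.isLimit _).conePointUniqueUpToIso (isLimitExpCone J adjE π hπ huniv)) ≪≫
    ((wGenCoreflectorAdj T).rightAdjointUniq adjR).app M⟩

/-- Let `W` be a closeable left Kan extendable full subcategory of a
bicomplete category `C`: the inclusion `J` has a pointwise left Kan extension `(T, η)`
along itself with idempotent density comonad; (1) every object `V` of `W` is
exponentiable in `C`, with chosen exponential functors `Hom(V, -) = E V` right adjoint
to `- ⨯ J V`; (2) products `J V ⨯ J V'` of objects of `W` are `W`-generated (whence
objects of `W` and products `J V ⨯ Y` with `Y` generated are `W`-generated, which we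
record as `hVgen` and `hVY`); (3) for all `W`-generated `X, Y` and every product fan
`P` of `X` and `Y` in the subcategory `W_l[C]` of `W`-generated objects, the cone
`θ : J_X ×_C Y ⇒ X ×_{W_l[C]} Y`, whose component at `σ : J V ⟶ X` is
`σ ×_{W_l[C]} 1_Y`, is a colimiting cone in `C`; (4) for all `W`-generated `Y, Z` the
functor `S^Y_Z : (W/Y)ᵒᵖ ⥤ C`, `σ ↦ Hom(V, Z)`, has a limit in `C`.  Then `W_l[C]` is
cartesian closed, and the internal hom of `Y` and `Z` is obtained by applying a
coreflector `R : C ⥤ W_l[C]` to the limit of `S^Y_Z`. -/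
theorem wGenerated_cartesianClosed
    {W : Type u₁} [Category.{v₁} W] {C : Type u₂} [Category.{v₂} C]
    [HasLimits C] [HasColimits C]
    (J : W ⥤ C) [J.Full] [J.Faithful]
    (T : Comonad C) (η : J ⟶ J ⋙ (T : C ⥤ C))
    (hkan : (Functor.LeftExtension.mk (T : C ⥤ C) η).IsPointwiseLeftKanExtension)
    (hε : ∀ w : W, η.app w ≫ T.ε.app (J.obj w) = 𝟙 (J.obj w))
    (hδ : ∀ w : W, η.app w ≫ T.δ.app (J.obj w) = η.app w ≫ (T : C ⥤ C).map (η.app w))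
    (hidem : IsIso T.δ)
    -- (1) chosen exponentials for objects of `W`
    (E : W → C ⥤ C)
    (adjE : ∀ V : W, prod.functor.flip.obj (J.obj V) ⊣ E V)
    -- (2) and its consequences, needed to formulate (3)
    (hVgen : ∀ V : W, WGen T (J.obj V))
    (hprod : ∀ V V' : W, WGen T (J.obj V ⨯ J.obj V'))
    (hVY : ∀ (V : W) (Y : C), WGen T Y → WGen T (J.obj V ⨯ Y))
    -- (3) the cones `θ` are colimiting
    (hθ : ∀ (X Y : C) (hX : WGen T X) (hY : WGen T Y)
      (P : BinaryFan (⟨X, hX⟩ : ObjectProperty.FullSubcategory (WGen T)) ⟨Y, hY⟩) (hP : IsLimit P)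
      (Z₀ : C) (c : ∀ σ : CostructuredArrow J X, (J.obj σ.left ⨯ Y) ⟶ Z₀),
      (∀ (σ σ' : CostructuredArrow J X) (m : σ ⟶ σ'),
        prod.map (J.map m.left) (𝟙 Y) ≫ c σ' = c σ) →
      ∃! h : P.pt.obj ⟶ Z₀, ∀ σ : CostructuredArrow J X,
        (ObjectProperty.ι (WGen T)).map (hP.lift (BinaryFan.mk
          (show (⟨J.obj σ.left ⨯ Y, hVY σ.left Y hY⟩ : ObjectProperty.FullSubcategory (WGen T)) ⟶
              ⟨X, hX⟩ from ObjectProperty.homMk ((prod.fst : J.obj σ.left ⨯ Y ⟶ J.obj σ.left) ≫ σ.hom : J.obj σ.left ⨯ Y ⟶ X))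
          (show (⟨J.obj σ.left ⨯ Y, hVY σ.left Y hY⟩ : ObjectProperty.FullSubcategory (WGen T)) ⟶
              ⟨Y, hY⟩ from ObjectProperty.homMk (prod.snd : J.obj σ.left ⨯ Y ⟶ Y)))) ≫ h = c σ)
    -- (4) the functors `S^Y_Z` have limits in `C`
    (hS : ∀ (Y Z : C), WGen T Y → WGen T Z →
      ∃ (M : C) (π : ∀ σ : CostructuredArrow J Y, M ⟶ (E σ.left).obj Z),
        (∀ (σ σ' : CostructuredArrow J Y) (m : σ ⟶ σ'),
          π σ = π σ' ≫ ((adjE σ.left).homEquiv ((E σ'.left).obj Z) Z)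
            (prod.map (𝟙 ((E σ'.left).obj Z)) (J.map m.left) ≫
              (adjE σ'.left).counit.app Z)) ∧
        (∀ (N : C) (ρ : ∀ σ : CostructuredArrow J Y, N ⟶ (E σ.left).obj Z),
          (∀ (σ σ' : CostructuredArrow J Y) (m : σ ⟶ σ'),
            ρ σ = ρ σ' ≫ ((adjE σ.left).homEquiv ((E σ'.left).obj Z) Z)
              (prod.map (𝟙 ((E σ'.left).obj Z)) (J.map m.left) ≫
                (adjE σ'.left).counit.app Z)) →
          ∃! h : N ⟶ M, ∀ σ, h ≫ π σ = ρ σ)) :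
    -- conclusion: `W_l[C]` is cartesian closed, with internal hom the coreflection of
    -- the limit of `S^Y_Z`
    ∃ (cfp : CartesianMonoidalCategory (ObjectProperty.FullSubcategory (WGen T))),
      letI := cfp
      ∃ cc : MonoidalClosed (ObjectProperty.FullSubcategory (WGen T)),
        ∀ (Y Z : C) (hY : WGen T Y) (hZ : WGen T Z)
          (R : C ⥤ ObjectProperty.FullSubcategory (WGen T))
          (_ : ObjectProperty.ι (WGen T) ⊣ R)
          (M : C) (π : ∀ σ : CostructuredArrow J Y, M ⟶ (E σ.left).obj Z),
          (∀ (σ σ' : CostructuredArrow J Y) (m : σ ⟶ σ'),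
            π σ = π σ' ≫ ((adjE σ.left).homEquiv ((E σ'.left).obj Z) Z)
              (prod.map (𝟙 ((E σ'.left).obj Z)) (J.map m.left) ≫
                (adjE σ'.left).counit.app Z)) →
          (∀ (N : C) (ρ : ∀ σ : CostructuredArrow J Y, N ⟶ (E σ.left).obj Z),
            (∀ (σ σ' : CostructuredArrow J Y) (m : σ ⟶ σ'),
              ρ σ = ρ σ' ≫ ((adjE σ.left).homEquiv ((E σ'.left).obj Z) Z)
                (prod.map (𝟙 ((E σ'.left).obj Z)) (J.map m.left) ≫
                  (adjE σ'.left).counit.app Z)) →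
            ∃! h : N ⟶ M, ∀ σ, h ≫ π σ = ρ σ) →
          letI : Closed (⟨Y, hY⟩ : ObjectProperty.FullSubcategory (WGen T)) := cc.closed _
          Nonempty ((ihom (⟨Y, hY⟩ : ObjectProperty.FullSubcategory (WGen T))).obj ⟨Z, hZ⟩ ≅ R.obj M) :=
  wGenerated_cartesianClosed_general J T hidem E adjE hVY hθ hS
end

section
/- Let L be a frame which is compact (its top element ⊤ is a compact element: every subset S ⊆ L with ⨆ S = ⊤ has a finite subset with supremum ⊤) and regular. Then L is a continuous frame: every a ∈ L satisfies a = ⨆ {x ∈ L | x ≪ a}. -/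
universe u

/-- The way-below relation in a complete lattice: `x ≪ a` iff for every nonempty
directed subset `D` with `a ≤ ⨆ D` there is `d ∈ D` with `x ≤ d`. -/
def WayBelow {L : Type u} [CompleteLattice L] (x a : L) : Prop :=
  ∀ D : Set L, D.Nonempty → DirectedOn (· ≤ ·) D → a ≤ sSup D → ∃ d ∈ D, x ≤ d

/-!
In a compact frame, if `x` is rather below `a` and `a ≤ ⨆ D` for a directed `D`, then
`xᶜ ⊔ ⨆ D = ⊤`, so compactness of `⊤` yields a single `d ∈ D` with `xᶜ ⊔ d = ⊤`, whence `x ≤ d`.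
Thus rather below implies way below, and regularity gives continuity.
-/

open CompleteLattice

section CompleteLattice

variable {L : Type*} [CompleteLattice L]

theorem WayBelow.le {x a : L} (h : WayBelow x a) : x ≤ a := by
  obtain ⟨_, rfl, hxa⟩ :=
    h {a} (Set.singleton_nonempty a) (directedOn_singleton a) sSup_singleton.ge
  exact hxa

theorem isCompactElement_top_of_sSup_eq_top
    (h : ∀ S : Set L, sSup S = ⊤ → ∃ F : Finset L, ↑F ⊆ S ∧ sSup (↑F : Set L) = ⊤) :
    IsCompactElement (⊤ : L) := by
  rw [isCompactElement_iff_exists_le_sSup_of_le_sSup]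
  intro S hS
  obtain ⟨F, hFS, hF⟩ := h S (top_le_iff.mp hS)
  exact ⟨F, hFS, by rw [Finset.sup_id_eq_sSup, hF]⟩

theorem IsCompactElement.exists_le_sup_of_le_sup_sSup {k b : L} (hk : IsCompactElement k)
    {D : Set L} (hne : D.Nonempty) (hdir : DirectedOn (· ≤ ·) D) (hle : k ≤ b ⊔ sSup D) :
    ∃ d ∈ D, k ≤ b ⊔ d := by
  have hdir' : DirectedOn (· ≤ ·) ((b ⊔ ·) '' D) :=
    directedOn_image.mpr (hdir.mono fun _ _ h ↦ sup_le_sup_left h b)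
  obtain ⟨d₀, hd₀⟩ := hne
  have hsup : b ⊔ sSup D ≤ sSup ((b ⊔ ·) '' D) :=
    sup_le (le_sSup_of_le (Set.mem_image_of_mem _ hd₀) le_sup_left)
      (sSup_le fun d hd ↦ le_sSup_of_le (Set.mem_image_of_mem _ hd) le_sup_right)
  obtain ⟨_, ⟨d, hd, rfl⟩, hkd⟩ := (isCompactElement_iff_le_of_directed_sSup_le L k).mp hk _
    ⟨_, Set.mem_image_of_mem _ hd₀⟩ hdir' (hle.trans hsup)
  exact ⟨d, hd, hkd⟩

end CompleteLattice

theorem wayBelow_of_compl_sup_eq_top {L : Type*} [Order.Frame L] (htop : IsCompactElement (⊤ : L))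
    {x a : L} (h : xᶜ ⊔ a = ⊤) : WayBelow x a := by
  intro D hne hdir ha
  obtain ⟨d, hd, hxd⟩ :=
    htop.exists_le_sup_of_le_sup_sSup hne hdir (h ▸ sup_le_sup_left ha xᶜ)
  exact ⟨d, hd, disjoint_compl_right.le_of_codisjoint (codisjoint_iff.mpr (top_le_iff.mp hxd))⟩

/-- Let `L` be a frame which is compact (every subset with supremum `⊤`
has a finite subset with supremum `⊤`, i.e. `⊤` is a compact element) and regular
(every `a` is the supremum of the `x` rather below `a`, where `x ≺ a` means
`x* ⊔ a = ⊤` with `x*` the pseudocomplement).  Then `L` is a continuous frame: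
every `a ∈ L` satisfies `a = ⨆ {x | x ≪ a}` for the way-below relation `≪`. -/
theorem frame_continuous_of_compact_of_regular
    {L : Type u} [Order.Frame L]
    (hcompact : ∀ S : Set L, sSup S = ⊤ → ∃ F : Finset L, ↑F ⊆ S ∧ sSup (↑F : Set L) = ⊤)
    (hreg : ∀ a : L, a = sSup {x : L | xᶜ ⊔ a = ⊤}) :
    ∀ a : L, a = sSup {x : L | WayBelow x a} := by
  intro a
  have htop := isCompactElement_top_of_sSup_eq_top hcompact
  exact le_antisymm
    ((hreg a).trans_le (sSup_le_sSup fun x hx ↦ wayBelow_of_compl_sup_eq_top htop hx))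
    (sSup_le fun x hx ↦ hx.le)
end

section
/- Let X be a locally compact Hausdorff topological space. Let K(X) be the poset of compact subsets of X ordered by inclusion, regarded as a category, and let φ : K(X) ⥤ Top be the functor sending a compact subset K to K with the subspace topology and each inclusion K ⊆ K′ to the corresponding continuous inclusion map. Then the cocone on φ with apex X whose components are the inclusion maps K → X is a colimit cocone in the category of topological spaces. -/
open CategoryTheory CategoryTheory.Limits

universe u

/-- The poset of compact subsets of `X`, regarded as a category, mapped into `TopCat` by
sending a compact subset to the corresponding subspace and an inclusion of compact
subsets to the inclusion map. -/
def compactSubsetsDiagram (X : Type u) [TopologicalSpace X] :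
    {K : Set X // IsCompact K} ⥤ TopCat.{u} where
  obj K := TopCat.of K.1
  map {K K'} f :=
    TopCat.ofHom (ContinuousMap.mk (Set.inclusion (leOfHom f)) (continuous_inclusion (leOfHom f)))
  map_id _ := rfl
  map_comp _ _ := rfl

/-- The cocone on the diagram of compact subsets of `X` whose apex is `X` and whose
components are the inclusion maps `K → X`. -/
def compactSubsetsCocone (X : Type u) [TopologicalSpace X] :
    Cocone (compactSubsetsDiagram X) where
  pt := TopCat.of X
  ι :=
    { app := fun K => TopCat.ofHom (ContinuousMap.mk (Subtype.val) continuous_subtype_val)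
      naturality := fun _ _ _ => rfl }

/-!
A cocone `s` under the diagram determines a function `X → s.pt` through the singletons, and
naturality along `{x} ⊆ K` shows that it restricts to the component `s.ι.app K` on every
compact `K`. The function is therefore continuous as soon as the topology of `X` is coherent
with its compact subsets, which is the case for locally compact spaces.
-/

namespace CompactSubsetsCocone

variable {X : Type u} [TopologicalSpace X]

def singleton (x : X) : {K : Set X // IsCompact K} := ⟨{x}, isCompact_singleton⟩

def descFun (s : Cocone (compactSubsetsDiagram X)) (x : X) : s.pt :=
  s.ι.app (singleton x) ⟨x, rfl⟩

theorem ι_app_apply (s : Cocone (compactSubsetsDiagram X)) (K : {K : Set X // IsCompact K})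
    (x : K.1) : s.ι.app K x = descFun s x := by
  have h := ConcreteCategory.congr_hom
    (s.ι.naturality (homOfLE (Set.singleton_subset_iff.mpr x.2) : singleton x.1 ⟶ K)) ⟨x.1, rfl⟩
  exact h

theorem continuous_descFun [CompactlyCoherentSpace X] (s : Cocone (compactSubsetsDiagram X)) :
    Continuous (descFun s) := by
  refine CompactlyCoherentSpace.isCoherentWith.continuous_iff.mpr fun K hK => ?_
  rw [continuousOn_iff_continuous_domRestrict]
  exact (s.ι.app ⟨K, hK⟩).hom.continuous.congr (ι_app_apply s ⟨K, hK⟩)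

def isColimit [CompactlyCoherentSpace X] : IsColimit (compactSubsetsCocone X) where
  desc s := TopCat.ofHom ⟨descFun s, continuous_descFun s⟩
  fac s K := by
    ext x
    exact (ι_app_apply s K x).symm
  uniq s m hm := by
    ext x
    exact ConcreteCategory.congr_hom (hm (singleton x)) ⟨x, rfl⟩

end CompactSubsetsCocone

theorem isColimit_compactSubsetsCocone_general
    (X : Type u) [TopologicalSpace X] [LocallyCompactSpace X] :
    Nonempty (IsColimit (compactSubsetsCocone X)) :=
  ⟨CompactSubsetsCocone.isColimit⟩

/-- Let `X` be a locally compact Hausdorff topological space.  Then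
the cocone on the diagram of compact subsets of `X` (with the subspace topologies and
inclusion maps) whose apex is `X` and whose components are the inclusions `K → X` is a
colimit cocone in the category of topological spaces. -/
theorem isColimit_compactSubsetsCocone
    (X : Type u) [TopologicalSpace X] [LocallyCompactSpace X] [T2Space X] :
    Nonempty (IsColimit (compactSubsetsCocone X)) :=
  isColimit_compactSubsetsCocone_general X
end
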